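/- If φ : X_p → X_q is a finitary isomorphism with finite expectation, then a_φ(x) < ∞ for μ_p-a.e. x ∈ X_p; that is, for a.e. x there exists M ∈ ℕ such that r_φ(g⁻¹·x) ≤ |g| + M for every g ∈ F_ℓ ∖ W_a. -/

import Mathlib

open MeasureTheory ProbabilityTheory Filter

namespace Finitary

/-- The free group `F_ℓ` on `ℓ` generators. -/
abbrev FG (ℓ : ℕ) := FreeGroup (Fin ℓ)

instance {ℓ : ℕ} : Countable (FG ℓ) := FreeGroup.toWord_injective.countable

/-- The word length on the free group. -/
noncomputable def wl {ℓ : ℕ} (g : FG ℓ) : ℕ := FreeGroup.norm g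

/-- The ball `B(r)` of radius `r` centered at the identity. -/
def ball (ℓ r : ℕ) : Set (FG ℓ) := {g | wl g ≤ r}

/-- `W_a`: the set of reduced words ending in the generator `a`, together with the identity. -/
def Wa {ℓ : ℕ} (a : Fin ℓ) : Set (FG ℓ) :=
  {g | g = 1 ∨ wl g = wl (g * (FreeGroup.of a)⁻¹) + 1}

/-- The configuration space `X_p = {1,…,m}^{F_ℓ}`. -/
abbrev Conf (ℓ m : ℕ) := FG ℓ → Fin m

/-- The shift action `(g·x)_h = x_{g⁻¹h}`. -/
def shift {ℓ m : ℕ} (g : FG ℓ) (x : Conf ℓ m) : Conf ℓ m := fun h => x (g⁻¹ * h)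

/-- `μ` is the Bernoulli product measure on `X_p` with marginal weights `P`:
every cylinder set has measure equal to the product of the weights of its fixed symbols. -/
def IsBernoulli {ℓ m : ℕ} (P : Fin m → ℝ) (μ : Measure (Conf ℓ m)) : Prop :=
  IsProbabilityMeasure μ ∧
    ∀ (A : Finset (FG ℓ)) (σ : FG ℓ → Fin m),
      (μ {x | ∀ g ∈ A, x g = σ g}).toReal = ∏ g ∈ A, P (σ g)

/-- The set of radii `r` such that the ball `B(r)` determines `φ(x)_e`. -/
def codeSet {ℓ m n : ℕ} (φ : Conf ℓ m → Conf ℓ n) (x : Conf ℓ m) : Set ℕ :=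
  {r | ∀ x' : Conf ℓ m, (∀ g ∈ ball ℓ r, x' g = x g) → φ x' 1 = φ x 1}

/-- `r_φ(x)`: the least radius of a ball determining `φ(x)_e`. -/
noncomputable def rphi {ℓ m n : ℕ} (φ : Conf ℓ m → Conf ℓ n) (x : Conf ℓ m) : ℕ :=
  sInf (codeSet φ x)

/-- `v_φ(x) = |B(r_φ(x))|`. -/
noncomputable def vphi {ℓ m n : ℕ} (φ : Conf ℓ m → Conf ℓ n) (x : Conf ℓ m) : ℕ :=
  (ball ℓ (rphi φ x)).ncard

/-- A finitary coding: a measurable, equivariant, measure-preserving map which is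
a.e. finitarily determined at the identity coordinate (i.e. continuous off a null set). -/
structure IsFinitaryCoding {ℓ m n : ℕ} (μp : Measure (Conf ℓ m)) (μq : Measure (Conf ℓ n))
    (φ : Conf ℓ m → Conf ℓ n) : Prop where
  measurable : Measurable φ
  measurePreserving : MeasurePreserving φ μp μq
  equivariant : ∀ g : FG ℓ, ∀ᵐ x ∂μp, φ (shift g x) = shift g (φ x)
  finitary : ∀ᵐ x ∂μp, (codeSet φ x).Nonempty

/-- A finitary isomorphism: a pair of mutually inverse (mod null sets) finitary codings. -/
structure IsFinitaryIso {ℓ m n : ℕ} (μp : Measure (Conf ℓ m)) (μq : Measure (Conf ℓ n))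
    (φ : Conf ℓ m → Conf ℓ n) (ψ : Conf ℓ n → Conf ℓ m) : Prop where
  toCoding : IsFinitaryCoding μp μq φ
  invCoding : IsFinitaryCoding μq μp ψ
  leftInv : ∀ᵐ x ∂μp, ψ (φ x) = x
  rightInv : ∀ᵐ y ∂μq, φ (ψ y) = y

/-- Finite expectation of code volume: `∫ v_φ dμ_p < ∞` and `∫ v_{φ⁻¹} dμ_q < ∞`. -/
def FiniteExpectation {ℓ m n : ℕ} (μp : Measure (Conf ℓ m)) (μq : Measure (Conf ℓ n))
    (φ : Conf ℓ m → Conf ℓ n) (ψ : Conf ℓ n → Conf ℓ m) : Prop :=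
  (∫⁻ x, (vphi φ x : ENNReal) ∂μp) < ⊤ ∧ (∫⁻ y, (vphi ψ y : ENNReal) ∂μq) < ⊤

/-- The sub-σ-algebra generated by the coordinate maps `x ↦ x_g`, `g ∈ S`. -/
def coordAlg {ℓ m : ℕ} (S : Set (FG ℓ)) : MeasurableSpace (Conf ℓ m) :=
  MeasurableSpace.comap (fun x => S.restrict x) inferInstance

/-- The past algebra `𝒜_{p,a}`, generated by the coordinates in `W_a`. -/
def pastAlg {ℓ m : ℕ} (a : Fin ℓ) : MeasurableSpace (Conf ℓ m) := coordAlg (Wa a)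

/-- The atom of `x` for the σ-algebra generated by the coordinates in `S`. -/
def atomOn {ℓ m : ℕ} (S : Set (FG ℓ)) (x : Conf ℓ m) : Set (Conf ℓ m) :=
  {y | ∀ g ∈ S, y g = x g}

/-- The regular conditional probability `μ^𝒞(s | x)` given the sub-σ-algebra `𝒞`. -/
noncomputable def condProb {ℓ m : ℕ} (μ : Measure (Conf ℓ m)) [IsFiniteMeasure μ]
    (𝒞 : MeasurableSpace (Conf ℓ m)) (s : Set (Conf ℓ m)) (x : Conf ℓ m) : ENNReal :=
  @condExpKernel (Conf ℓ m) MeasurableSpace.pi inferInstance μ inferInstance 𝒞 x s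

/-- Conditional information `I_μ(ℬ|𝒞)(x) = −log μ^𝒞([x]_ℬ | x)`, where the atom `[x]_ℬ`
of the sub-σ-algebra `ℬ` is supplied explicitly. -/
noncomputable def condInfo {ℓ m : ℕ} (μ : Measure (Conf ℓ m)) [IsFiniteMeasure μ]
    (𝒞 : MeasurableSpace (Conf ℓ m)) (atomB : Set (Conf ℓ m)) (x : Conf ℓ m) : ℝ :=
  - Real.log ((condProb μ 𝒞 atomB x).toReal)

/-- The information cocycle `J(𝒜_{p,a}, V) = I(𝒜_{p,a}|V⁻¹𝒜_{p,a}) − I(V⁻¹𝒜_{p,a}|𝒜_{p,a})`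
for a measure-preserving `V` (the Radon–Nikodym term of the general definition vanishes). -/
noncomputable def Jcoc {ℓ m : ℕ} (a : Fin ℓ) (μ : Measure (Conf ℓ m)) [IsFiniteMeasure μ]
    (V : Conf ℓ m → Conf ℓ m) (x : Conf ℓ m) : ℝ :=
  condInfo μ (MeasurableSpace.comap V (pastAlg a)) (atomOn (Wa a) x) x
    - condInfo μ (pastAlg a) (V ⁻¹' atomOn (Wa a) (V x)) x

/-- The shift by `g` as a bijection of the configuration space. -/
def shiftEquiv {ℓ m : ℕ} (g : FG ℓ) : Equiv.Perm (Conf ℓ m) where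
  toFun := shift g
  invFun := shift g⁻¹
  left_inv x := by funext h; simp [shift, mul_assoc]
  right_inv x := by funext h; simp [shift, mul_assoc]

/-- A locally finite measure-preserving measurable bijection of `(X_p, μ)`. -/
def IsLocallyFiniteMP {ℓ m : ℕ} (μ : Measure (Conf ℓ m)) (V : Equiv.Perm (Conf ℓ m)) : Prop :=
  Measurable ⇑V ∧ Measurable ⇑V.symm ∧ MeasurePreserving ⇑V μ μ ∧
    ∀ᵐ x ∂μ, {g : FG ℓ | V x g ≠ x g}.Finite

/-- The group `G_p` generated by the shifts together with the locally finite
measure-preserving bijections. -/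
def Gp {ℓ m : ℕ} (μ : Measure (Conf ℓ m)) : Subgroup (Equiv.Perm (Conf ℓ m)) :=
  Subgroup.closure ({V | ∃ g : FG ℓ, V = shiftEquiv g} ∪ {V | IsLocallyFiniteMP μ V})

/-- The cylinder set where the coordinates on `S` are fixed to the values of `η`. -/
def cylOn {ℓ m : ℕ} (S : Set (FG ℓ)) (η : FG ℓ → Fin m) : Set (Conf ℓ m) :=
  {x | ∀ g ∈ S, x g = η g}

/-- `H_C^+`: locally finite m.p. bijections fixing all coordinates in `B(N) ∪ (F_ℓ ∖ W_a)`. -/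
def HCplus {ℓ m : ℕ} (μ : Measure (Conf ℓ m)) (a : Fin ℓ) (N : ℕ) :
    Set (Equiv.Perm (Conf ℓ m)) :=
  {h | IsLocallyFiniteMP μ h ∧ ∀ᵐ x ∂μ, ∀ g ∈ ball ℓ N ∪ (Wa a)ᶜ, h x g = x g}

/-- `H_C^-`: locally finite m.p. bijections fixing all coordinates in `W_a ∪ B(N)`. -/
def HCminus {ℓ m : ℕ} (μ : Measure (Conf ℓ m)) (a : Fin ℓ) (N : ℕ) :
    Set (Equiv.Perm (Conf ℓ m)) :=
  {h | IsLocallyFiniteMP μ h ∧ ∀ᵐ x ∂μ, ∀ g ∈ Wa a ∪ ball ℓ N, h x g = x g}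

/-- The normalized measure `μ_C(A) = μ(A)/μ(C)` (real-valued). -/
noncomputable def relMeas {ℓ m : ℕ} (μ : Measure (Conf ℓ m)) (C A : Set (Conf ℓ m)) : ℝ :=
  (μ A).toReal / (μ C).toReal

/-- The set where `m_φ(x) ≤ M`. -/
def mphiLe {ℓ m n : ℕ} (φ : Conf ℓ m → Conf ℓ n) (a : Fin ℓ) (M : ℕ) : Set (Conf ℓ m) :=
  {x | ∀ g ∈ Wa a, rphi φ (shift g⁻¹ x) ≤ wl g + M}

/-- The set where `a_φ(x) ≤ M`. -/
def aphiLe {ℓ m n : ℕ} (φ : Conf ℓ m → Conf ℓ n) (a : Fin ℓ) (M : ℕ) : Set (Conf ℓ m) :=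
  {x | ∀ g ∉ Wa a, rphi φ (shift g⁻¹ x) ≤ wl g + M}

/-- The set `D = C ∩ {x : m_φ(x) ≤ M, a_φ(x) ≤ M}` for the cylinder `C` over `B(M)`
determined by `η`. -/
def Dset {ℓ m n : ℕ} (φ : Conf ℓ m → Conf ℓ n) (a : Fin ℓ) (M : ℕ) (η : FG ℓ → Fin m) :
    Set (Conf ℓ m) :=
  cylOn (ball ℓ M) η ∩ (mphiLe φ a M ∩ aphiLe φ a M)

/-- The coboundary equation `J(𝒜_{p,a}, V) = J(𝒜_{q,a}, φVφ⁻¹)∘φ + f∘V − f` a.e.,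
for every `V ∈ G_p`. -/
def CocycleEq {ℓ m n : ℕ} (a : Fin ℓ) (μp : Measure (Conf ℓ m)) (μq : Measure (Conf ℓ n))
    [IsFiniteMeasure μp] [IsFiniteMeasure μq] (φ : Conf ℓ m → Conf ℓ n)
    (ψ : Conf ℓ n → Conf ℓ m) (f : Conf ℓ m → ℝ) : Prop :=
  ∀ V ∈ Gp μp, ∀ᵐ x ∂μp,
    Jcoc a μp (⇑V) x = Jcoc a μq (φ ∘ ⇑V ∘ ψ) (φ x) + f (V x) - f x

/-- Tail property: every point obtained from a point of `D ∖ E` by altering coordinates only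
at `a^k` for `−M−n < k < −M` (or only at `a^k` for `M < k < M+n`) lies in `A`. -/
def TailProp {ℓ m : ℕ} (a : Fin ℓ) (M : ℕ) (D E A : Set (Conf ℓ m)) : Prop :=
  ∀ x ∈ D \ E, ∀ n : ℕ, ∀ x' : Conf ℓ m,
    ((∀ g : FG ℓ,
        (¬ ∃ k : ℤ, -(M : ℤ) - (n : ℤ) < k ∧ k < -(M : ℤ) ∧ g = (FreeGroup.of a) ^ k) →
        x' g = x g) ∨
     (∀ g : FG ℓ,
        (¬ ∃ k : ℤ, (M : ℤ) < k ∧ k < (M : ℤ) + (n : ℤ) ∧ g = (FreeGroup.of a) ^ k) →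
        x' g = x g)) →
    x' ∈ A

/-! By shift invariance of the Bernoulli measure,
`∑_g μ(r_φ(g⁻¹·x) > |g|) = ∑_g μ(r_φ > |g|) = ∫ #{g : |g| < r_φ} dμ ≤ ∫ v_φ dμ < ∞`,
so by Borel–Cantelli a.e. `x` has only finitely many `g` with `r_φ(g⁻¹·x) > |g|`, and the
largest of their radii `r_φ(g⁻¹·x)` serves as `M`. -/

lemma tsum_measure_eq_lintegral_encard {α ι : Type*} [MeasurableSpace α] [Countable ι]
    {μ : Measure α} {s : ι → Set α} (hs : ∀ i, MeasurableSet (s i)) :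
    ∑' i, μ (s i) = ∫⁻ x, ({i | x ∈ s i}.encard : ENNReal) ∂μ := by
  simp_rw [← lintegral_indicator_one (hs _)]
  rw [← lintegral_tsum fun i => (measurable_one.indicator (hs i)).aemeasurable]
  congr 1 with x
  rw [← ENNReal.tsum_set_one, tsum_subtype {i | x ∈ s i} fun _ => (1 : ENNReal)]
  congr 1 with i

lemma exists_le_add_of_finite_setOf_lt {α : Type*} {f w : α → ℕ} (h : {a | w a < f a}.Finite) :
    ∃ M, ∀ a, f a ≤ w a + M := by
  refine ⟨h.toFinset.sup f, fun a => ?_⟩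
  by_cases ha : w a < f a
  · exact (Finset.le_sup (h.mem_toFinset.mpr ha)).trans (Nat.le_add_left _ _)
  · exact (not_lt.mp ha).trans (Nat.le_add_right _ _)

section Cylinders

variable {ι β : Type*}

def finiteCylinders (ι β : Type*) : Set (Set (ι → β)) :=
  {s | ∃ (A : Finset ι) (σ : ι → β), s = {x | ∀ i ∈ A, x i = σ i}}

lemma isPiSystem_finiteCylinders : IsPiSystem (finiteCylinders ι β) := by
  classical
  rintro _ ⟨A, σ, rfl⟩ _ ⟨B, τ, rfl⟩ ⟨y, hyA, hyB⟩
  refine ⟨A ∪ B, y, Set.ext fun x => ?_⟩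
  simp only [Set.mem_inter_iff, Set.mem_ofPred_eq, Finset.mem_union]
  constructor
  · rintro ⟨hA, hB⟩ i (hi | hi)
    · rw [hA i hi, hyA i hi]
    · rw [hB i hi, hyB i hi]
  · intro h
    exact ⟨fun i hi => (h i (.inl hi)).trans (hyA i hi),
      fun i hi => (h i (.inr hi)).trans (hyB i hi)⟩

variable [MeasurableSpace β] [MeasurableSingletonClass β] [Countable β]

lemma measurableSet_of_mem_finiteCylinders {s : Set (ι → β)} (hs : s ∈ finiteCylinders ι β) :
    MeasurableSet s := by
  obtain ⟨A, σ, rfl⟩ := hs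
  simp only [Set.ofPred_forall]
  exact .biInter A.countable_toSet fun i _ =>
    measurableSet_eq_fun (measurable_pi_apply i) measurable_const

lemma generateFrom_finiteCylinders :
    MeasurableSpace.generateFrom (finiteCylinders ι β) = MeasurableSpace.pi := by
  refine le_antisymm (MeasurableSpace.generateFrom_le fun s hs =>
    measurableSet_of_mem_finiteCylinders hs) ?_
  refine iSup_le fun i => measurable_iff_comap_le.mp ?_
  refine @measurable_to_countable' _ _ _ _ (_) _ fun c => .basic _ ⟨{i}, fun _ => c, ?_⟩
  ext x
  simp

lemma measurableSet_of_determinedOn {S : Set ι} (hS : S.Finite) {s : Set (ι → β)}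
    (hs : ∀ x y, (∀ i ∈ S, x i = y i) → x ∈ s → y ∈ s) : MeasurableSet s := by
  have : Finite S := hS.to_subtype
  have hpre : S.domRestrict ⁻¹' (S.domRestrict '' s) = s := by
    refine Set.Subset.antisymm ?_ (Set.subset_preimage_image _ _)
    rintro y ⟨x, hx, hxy⟩
    exact hs x y (fun i hi => congrFun hxy ⟨i, hi⟩) hx
  rw [← hpre]
  exact (Set.to_countable _).measurableSet.preimage
    (measurable_pi_lambda _ fun i => measurable_pi_apply _)

end Cylinders

section Bernoulli

variable {ℓ m : ℕ} {P : Fin m → ℝ} {μ ν : Measure (Conf ℓ m)}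

lemma measurable_shift (g : FG ℓ) : Measurable (shift g : Conf ℓ m → Conf ℓ m) :=
  measurable_pi_lambda _ fun _ => measurable_pi_apply _

lemma IsBernoulli.ext (hμ : IsBernoulli P μ) (hν : IsBernoulli P ν) : μ = ν := by
  have := hμ.1
  have := hν.1
  refine ext_of_generate_finite _ generateFrom_finiteCylinders.symm isPiSystem_finiteCylinders
    ?_ (by simp)
  rintro _ ⟨A, σ, rfl⟩
  rw [← ENNReal.toReal_eq_toReal_iff' (measure_ne_top _ _) (measure_ne_top _ _), hμ.2, hν.2]

lemma shift_preimage_cylinder (g : FG ℓ) (A : Finset (FG ℓ)) (σ : FG ℓ → Fin m) :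
    shift g ⁻¹' {x | ∀ h ∈ A, x h = σ h}
      = {x | ∀ h ∈ A.image (g⁻¹ * ·), x h = σ (g * h)} := by
  ext x
  simp only [Set.mem_preimage, Set.mem_ofPred_eq, Finset.forall_mem_image, shift,
    mul_inv_cancel_left]

lemma IsBernoulli.map_shift (hμ : IsBernoulli P μ) (g : FG ℓ) :
    IsBernoulli P (μ.map (shift g)) := by
  have := hμ.1
  refine ⟨Measure.isProbabilityMeasure_map (measurable_shift g).aemeasurable, fun A σ => ?_⟩
  rw [Measure.map_apply (measurable_shift g)
      (measurableSet_of_mem_finiteCylinders ⟨A, σ, rfl⟩), shift_preimage_cylinder, hμ.2,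
    Finset.prod_image fun _ _ _ _ => mul_left_cancel]
  simp

lemma IsBernoulli.measurePreserving_shift (hμ : IsBernoulli P μ) (g : FG ℓ) :
    MeasurePreserving (shift g) μ μ :=
  ⟨measurable_shift g, (hμ.map_shift g).ext hμ⟩

end Bernoulli

section CodingRadius

variable {ℓ m n : ℕ}

lemma ball_finite (ℓ r : ℕ) : (ball ℓ r).Finite :=
  ((List.finite_length_le (Fin ℓ × Bool) r).preimage FreeGroup.toWord_injective.injOn).subset
    fun _ hg => hg

lemma mem_codeSet_mono {φ : Conf ℓ m → Conf ℓ n} {x : Conf ℓ m} {r s : ℕ} (hrs : r ≤ s)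
    (hr : r ∈ codeSet φ x) : s ∈ codeSet φ x :=
  fun x' hx' => hr x' fun g hg => hx' g (le_trans hg hrs)

lemma rphi_le_iff {φ : Conf ℓ m → Conf ℓ n} {x : Conf ℓ m} {r : ℕ} :
    rphi φ x ≤ r ↔ r ∈ codeSet φ x ∨ codeSet φ x = ∅ := by
  rcases (codeSet φ x).eq_empty_or_nonempty with hempty | hne
  · simp [rphi, hempty]
  · refine ⟨fun h => .inl (mem_codeSet_mono h (Nat.sInf_mem hne)), ?_⟩
    rintro (hr | hempty)
    · exact Nat.sInf_le hr
    · exact absurd hempty hne.ne_empty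

lemma measurableSet_mem_codeSet (φ : Conf ℓ m → Conf ℓ n) (r : ℕ) :
    MeasurableSet {x | r ∈ codeSet φ x} :=
  measurableSet_of_determinedOn (ball_finite ℓ r) fun _ y hxy hx x' hx' =>
    (hx x' fun g hg => (hx' g hg).trans (hxy g hg).symm).trans
      (hx y fun g hg => (hxy g hg).symm).symm

lemma measurable_rphi (φ : Conf ℓ m → Conf ℓ n) : Measurable (rphi φ) := by
  refine measurable_of_Iic fun r => ?_
  have hempty : {x | codeSet φ x = ∅} = ⋂ s, {x | s ∈ codeSet φ x}ᶜ := by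
    ext x
    simp [Set.eq_empty_iff_forall_notMem]
  simp only [Set.preimage, Set.mem_Iic, rphi_le_iff, Set.ofPred_or, hempty]
  exact (measurableSet_mem_codeSet φ r).union
    (.iInter fun s => (measurableSet_mem_codeSet φ s).compl)

lemma encard_setOf_wl_lt_le_vphi (φ : Conf ℓ m → Conf ℓ n) (x : Conf ℓ m) :
    {g : FG ℓ | wl g < rphi φ x}.encard ≤ vphi φ x := by
  rw [vphi, (ball_finite ℓ _).cast_ncard_eq]
  exact Set.encard_le_encard fun _ hg => show wl _ ≤ _ from le_of_lt hg

end CodingRadius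

theorem aphi_finite_ae_general
    {ℓ m n : ℕ} (a : Fin ℓ) (P : Fin m → ℝ)
    (μp : Measure (Conf ℓ m)) (μq : Measure (Conf ℓ n))
    (hμp : IsBernoulli P μp)
    (φ : Conf ℓ m → Conf ℓ n) (ψ : Conf ℓ n → Conf ℓ m)
    (hexp : FiniteExpectation μp μq φ ψ) :
    ∀ᵐ x ∂μp, ∃ M : ℕ, ∀ g ∉ Wa a, rphi φ (shift g⁻¹ x) ≤ wl g + M := by
  have hlarge : ∀ g : FG ℓ, MeasurableSet {x | wl g < rphi φ x} := fun g =>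
    measurableSet_lt measurable_const (measurable_rphi φ)
  have hsum : ∑' g : FG ℓ, μp (shift g⁻¹ ⁻¹' {x | wl g < rphi φ x}) < ⊤ := by
    calc ∑' g : FG ℓ, μp (shift g⁻¹ ⁻¹' {x | wl g < rphi φ x})
        = ∑' g : FG ℓ, μp {x | wl g < rphi φ x} := tsum_congr fun g =>
          (hμp.measurePreserving_shift g⁻¹).measure_preimage (hlarge g).nullMeasurableSet
      _ = ∫⁻ x, ({g : FG ℓ | wl g < rphi φ x}.encard : ENNReal) ∂μp :=
          tsum_measure_eq_lintegral_encard hlarge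
      _ ≤ ∫⁻ x, (vphi φ x : ENNReal) ∂μp := lintegral_mono fun x => by
          simpa using ENat.toENNReal_le.mpr (encard_setOf_wl_lt_le_vphi φ x)
      _ < ⊤ := hexp.1
  filter_upwards [ae_finite_setOfPred_mem hsum.ne] with x hx
  obtain ⟨M, hM⟩ := exists_le_add_of_finite_setOf_lt hx
  exact ⟨M, fun g _ => hM g⟩

theorem aphi_finite_ae
    {ℓ m n : ℕ} (hℓ : 1 ≤ ℓ) (a : Fin ℓ) (P : Fin m → ℝ) (Q : Fin n → ℝ)
    (hP : ∀ i, 0 < P i) (hQ : ∀ j, 0 < Q j)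
    (hPsum : ∑ i, P i = 1) (hQsum : ∑ j, Q j = 1)
    (μp : Measure (Conf ℓ m)) (μq : Measure (Conf ℓ n))
    (hμp : IsBernoulli P μp) (hμq : IsBernoulli Q μq)
    (φ : Conf ℓ m → Conf ℓ n) (ψ : Conf ℓ n → Conf ℓ m)
    (hiso : IsFinitaryIso μp μq φ ψ) (hexp : FiniteExpectation μp μq φ ψ) :
    ∀ᵐ x ∂μp, ∃ M : ℕ, ∀ g ∉ Wa a, rphi φ (shift g⁻¹ x) ≤ wl g + M :=
  aphi_finite_ae_general a P μp μq hμp φ ψ hexp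

end Finitary
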